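/- Let ρ₁, ρ₂ ∈ ℂ and let ω ∈ ℂ with |ω| = 1. Then the 3×3 Hermitian matrix v with rows (1, 0, conj(ρ₁)·conj(ω)), (0, 1, conj(ρ₂)·conj(ω)), (ρ₁·ω, ρ₂·ω, 1 + |ρ₁|² + |ρ₂|²) is positive definite. In particular, the jump matrix v(x,t,k) of the Sasa–Satsuma Riemann–Hilbert problem (obtained with ω = e^{2ikx - 8ik³t}) is Hermitian and positive definite for every k ∈ ℝ. -/

import Mathlib

open Complex Matrix ComplexConjugate
open scoped ComplexOrder

noncomputable section

/-- The jump matrix with unimodular factor `ω`. -/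
def vmat (ρ₁ ρ₂ ω : ℂ) : Matrix (Fin 3) (Fin 3) ℂ :=
  !![1, 0, conj ρ₁ * conj ω;
     0, 1, conj ρ₂ * conj ω;
     ρ₁ * ω, ρ₂ * ω, 1 + (Complex.normSq ρ₁ : ℂ) + (Complex.normSq ρ₂ : ℂ)]

/-- The phase `θ(x,t,k) = 2ikx - 8ik³t`. -/
def theta (x t k : ℝ) : ℂ :=
  2 * Complex.I * (k : ℂ) * (x : ℂ) - 8 * Complex.I * (k : ℂ) ^ 3 * (t : ℂ)

/-! For `|ω| = 1` the jump matrix factors as `Bᴴ B` with `B = shearFactor (ρ₁ ω) (ρ₂ ω)` unipotent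
upper triangular, hence invertible, so `x† v x = ‖B x‖² > 0` for `x ≠ 0`. -/

def shearFactor (a b : ℂ) : Matrix (Fin 3) (Fin 3) ℂ :=
  !![1, 0, conj a;
     0, 1, conj b;
     0, 0, 1]

lemma det_shearFactor (a b : ℂ) : (shearFactor a b).det = 1 := by
  simp [shearFactor, det_fin_three]

lemma vmat_eq_conjTranspose_mul_shearFactor {ρ₁ ρ₂ ω : ℂ} (hω : ‖ω‖ = 1) :
    vmat ρ₁ ρ₂ ω = (shearFactor (ρ₁ * ω) (ρ₂ * ω))ᴴ * shearFactor (ρ₁ * ω) (ρ₂ * ω) := by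
  have hωω : ω * conj ω = 1 := by
    rw [mul_conj, normSq_eq_norm_sq, hω]; norm_num
  ext i j
  fin_cases i <;> fin_cases j <;>
    simp [vmat, shearFactor, conjTranspose_apply, mul_apply, Fin.sum_univ_three]
  simp only [← mul_conj]
  linear_combination (-(ρ₁ * conj ρ₁) - ρ₂ * conj ρ₂) * hωω

theorem vmat_posDef {ρ₁ ρ₂ ω : ℂ} (hω : ‖ω‖ = 1) : (vmat ρ₁ ρ₂ ω).PosDef := by
  rw [vmat_eq_conjTranspose_mul_shearFactor hω]
  refine .conjTranspose_mul_self _ (mulVec_injective_of_isUnit ?_)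
  rw [isUnit_iff_isUnit_det, det_shearFactor]
  exact isUnit_one

lemma norm_exp_theta (x t k : ℝ) : ‖exp (theta x t k)‖ = 1 := by
  simp [norm_exp, theta, ← ofReal_pow]

/-- For `|ω| = 1` the Hermitian matrix `v` is positive definite; in particular, the jump
matrix of the Sasa–Satsuma Riemann–Hilbert problem (with `ω = e^{2ikx-8ik³t}`) is Hermitian
and positive definite for every `k ∈ ℝ`. -/
theorem jump_matrix_posDef (ρ₁ ρ₂ : ℂ) :
    (∀ ω : ℂ, ‖ω‖ = 1 →
      (vmat ρ₁ ρ₂ ω).IsHermitian ∧ (vmat ρ₁ ρ₂ ω).PosDef) ∧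
    (∀ x t k : ℝ,
      (vmat ρ₁ ρ₂ (Complex.exp (theta x t k))).IsHermitian ∧
      (vmat ρ₁ ρ₂ (Complex.exp (theta x t k))).PosDef) := by
  have hermitian_posDef : ∀ ω : ℂ, ‖ω‖ = 1 → (vmat ρ₁ ρ₂ ω).IsHermitian ∧ (vmat ρ₁ ρ₂ ω).PosDef :=
    fun _ hω => ⟨(vmat_posDef hω).isHermitian, vmat_posDef hω⟩
  exact ⟨hermitian_posDef, fun x t k => hermitian_posDef _ (norm_exp_theta x t k)⟩
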